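/- arXiv:1109.1598 — 2 statements merged into one kernel-verified Lean document; each statement's English description precedes it below -/
import Mathlib

section
/- Let C be a category with pullbacks. Two objects X and Y are equivalent in the bicategory of spans 2Span(C) if and only if they are isomorphic in C. Equivalently (avoiding bicategory formalism): if there exist spans X ← U → Y and Y ← V → X whose composites (formed by pullback) are each isomorphic, as spans, to the identity spans X ← X → X and Y ← Y → Y respectively, then X ≅ Y in C. -/
/-!
If the composites `U ×_Y V` and `V ×_X U` are identified with `X` and `Y`, both legs of each
pullback agree, so the two pullbacks are related by swapping factors. Following `X ≅ U ×_Y V`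
through the swap into `V ×_X U ≅ Y` and back out along the other leg shows that
`X → U → Y` and `Y → V → X` are mutually inverse.
-/

open CategoryTheory CategoryTheory.Limits

namespace CategoryTheory.Limits

variable {C : Type*} [Category C] [HasPullbacks C] {X Y U V : C}

theorem comp_eq_id_of_pullback_iso_of_pullback_iso {a : U ⟶ X} {b : U ⟶ Y} {c : V ⟶ Y}
    {d : V ⟶ X} (φ : pullback b c ≅ X) (hφa : pullback.fst b c ≫ a = φ.hom)
    (hφd : pullback.snd b c ≫ d = φ.hom) (ψ : pullback d a ≅ Y)
    (hψc : pullback.fst d a ≫ c = ψ.hom) :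
    (φ.inv ≫ pullback.fst b c ≫ b) ≫ (ψ.inv ≫ pullback.fst d a ≫ d) = 𝟙 X := by
  let swap : pullback b c ⟶ pullback d a :=
    pullback.lift (pullback.snd b c) (pullback.fst b c) (hφd.trans hφa.symm)
  have swap_comp : swap ≫ ψ.hom = pullback.fst b c ≫ b := by
    rw [← hψc, pullback.lift_fst_assoc, ← pullback.condition]
  calc (φ.inv ≫ pullback.fst b c ≫ b) ≫ (ψ.inv ≫ pullback.fst d a ≫ d)
      = φ.inv ≫ swap ≫ pullback.fst d a ≫ d := by simp [← swap_comp]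
    _ = φ.inv ≫ pullback.snd b c ≫ d := by rw [pullback.lift_fst_assoc]
    _ = 𝟙 X := by simp [hφd]

theorem exists_pullback_iso_of_iso (e : X ≅ Y) :
    ∃ φ : pullback e.hom (𝟙 Y) ≅ X,
      pullback.fst e.hom (𝟙 Y) ≫ 𝟙 X = φ.hom ∧ pullback.snd e.hom (𝟙 Y) ≫ e.inv = φ.hom := by
  refine ⟨asIso (pullback.fst e.hom (𝟙 Y)), Category.comp_id _, ?_⟩
  rw [asIso_hom, ← Category.comp_id (pullback.snd _ _), ← pullback.condition]
  simp

end CategoryTheory.Limits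

/-- In the bicategory of spans in a category with pullbacks, two objects are equivalent
(there are spans `X ← U → Y` and `Y ← V → X` whose pullback-composites are isomorphic,
as spans, to the identity spans) if and only if they are isomorphic in `C`. -/
theorem span_equiv_iff_iso {C : Type*} [Category C] [HasPullbacks C] (X Y : C) :
    (∃ (U V : C) (a : U ⟶ X) (b : U ⟶ Y) (c : V ⟶ Y) (d : V ⟶ X),
      -- the composite span `X ← U ×_Y V → X` is isomorphic to the identity span on `X`
      (∃ φ : pullback b c ≅ X,
        pullback.fst b c ≫ a = φ.hom ∧ pullback.snd b c ≫ d = φ.hom) ∧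
      -- the composite span `Y ← V ×_X U → Y` is isomorphic to the identity span on `Y`
      (∃ ψ : pullback d a ≅ Y,
        pullback.fst d a ≫ c = ψ.hom ∧ pullback.snd d a ≫ b = ψ.hom))
    ↔ Nonempty (X ≅ Y) := by
  constructor
  · rintro ⟨U, V, a, b, c, d, ⟨φ, hφa, hφd⟩, ⟨ψ, hψc, hψb⟩⟩
    exact ⟨⟨_, _, comp_eq_id_of_pullback_iso_of_pullback_iso φ hφa hφd ψ hψc,
      comp_eq_id_of_pullback_iso_of_pullback_iso ψ hψc hψb φ hφa⟩⟩
  · rintro ⟨e⟩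
    exact ⟨X, Y, 𝟙 X, e.hom, 𝟙 Y, e.inv, exists_pullback_iso_of_iso e,
      exists_pullback_iso_of_iso e.symm⟩
end

section
/- For a commutative monoid M and a span of finite sets X ←f− U −g→ Y, define the operation M^X → M^Y sending A to the function y ↦ ∑_{u ∈ g⁻¹(y)} A(f(u)). Then this assignment is functorial: for composable spans X ← U → Y and Y ← V → Z, the operation of the composite span (formed by the pullback U ×_Y V) equals the composite of the two operations. -/
/-!
The span operation is pull-back along `f` followed by summation over the fibres of `g`.
Fibrewise summation is functorial and satisfies base change along a pullback square: the
fibre of `g` over `f' v` and the fibre of `U ×_Y V → V` over `v` are both `{u | g u = f' v}`.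
Together these turn the operation of the composite span into the composite of the operations.
-/

open Finset

/-- The operation `M^X → M^Y` induced by a span `X ←f– U –g→ Y` of finite sets:
`A ↦ (y ↦ ∑_{u ∈ g⁻¹(y)} A (f u))`. -/
def spanOp {M X Y U : Type} [AddCommMonoid M] [Fintype U] [DecidableEq Y]
    (f : U → X) (g : U → Y) (A : X → M) : Y → M :=
  fun y => ∑ u ∈ univ.filter (fun u => g u = y), A (f u)

section FiberwiseSum

variable {M U V W Y : Type*} [AddCommMonoid M]

def fiberwiseSum [Fintype U] [DecidableEq Y] (g : U → Y) (B : U → M) : Y → M :=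
  fun y => ∑ u ∈ univ.filter (fun u => g u = y), B u

theorem fiberwiseSum_comp [Fintype U] [Fintype V] [DecidableEq V] [DecidableEq W]
    (h : V → W) (g : U → V) (B : U → M) :
    fiberwiseSum (h ∘ g) B = fiberwiseSum h (fiberwiseSum g B) := by
  funext w
  simp only [fiberwiseSum]
  rw [sum_fiberwise_eq_sum_filter]
  congr 1
  ext u
  simp

theorem fiberwiseSum_comp_eq_fiberwiseSum_pullback [Fintype U] [Fintype V] [DecidableEq V]
    [DecidableEq Y] (g : U → Y) (f' : V → Y) (B : U → M) :
    fiberwiseSum g B ∘ f' =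
      fiberwiseSum (Function.Pullback.snd (f := g) (g := f'))
        (B ∘ Function.Pullback.fst (f := g) (g := f')) := by
  funext v
  refine sum_bij' (fun u hu => ⟨(u, v), (mem_filter.1 hu).2⟩) (fun p _ => p.fst)
    (fun _ _ => mem_filter.2 ⟨mem_univ _, rfl⟩) ?_ (fun _ _ => rfl) ?_ (fun _ _ => rfl)
  · rintro ⟨⟨u, v'⟩, hp⟩ hv
    obtain rfl : v' = v := (mem_filter.1 hv).2
    exact mem_filter.2 ⟨mem_univ _, hp⟩
  · rintro ⟨⟨u, v'⟩, hp⟩ hv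
    obtain rfl : v' = v := (mem_filter.1 hv).2
    rfl

end FiberwiseSum

/-- Functoriality of span operations on a commutative monoid: the operation induced by
the pullback-composite span equals the composite of the induced operations. -/
theorem spanOp_comp {M X Y Z U V : Type} [AddCommMonoid M]
    [Fintype U] [Fintype V] [DecidableEq Y] [DecidableEq Z]
    (f : U → X) (g : U → Y) (f' : V → Y) (g' : V → Z) (A : X → M) :
    spanOp (fun p : {p : U × V // g p.1 = f' p.2} => f p.1.1)
           (fun p : {p : U × V // g p.1 = f' p.2} => g' p.1.2) A
      = spanOp f' g' (spanOp f g A) := by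
  classical
  calc _ = fiberwiseSum (g' ∘ Function.Pullback.snd)
          ((A ∘ f) ∘ Function.Pullback.fst (f := g) (g := f')) := rfl
    _ = fiberwiseSum g' (fiberwiseSum g (A ∘ f) ∘ f') := by
      rw [fiberwiseSum_comp, fiberwiseSum_comp_eq_fiberwiseSum_pullback]
    _ = _ := rfl
end
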